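/- The hydrogen flow Y(I) = f₂·(I/A)²/(f₁+(I/A)²) · N·I/(2F) is strictly increasing in I on (0,∞), and is strictly convex in I on the interval where (I/A)² ≤ f₁/3 (more precisely, Y''(I) > 0 whenever (I/A)² < 3 f₁). -/

import Mathlib

theorem hydrogen_flow_monotone_convex (f₁ f₂ A N F : ℝ)
    (hf₁ : 0 < f₁) (hf₂ : 0 < f₂) (hA : 0 < A) (hN : 0 < N) (hF : 0 < F)
    (Y : ℝ → ℝ)
    (hY : ∀ I, Y I = f₂ * ((I / A) ^ 2 / (f₁ + (I / A) ^ 2)) * (N * I / (2 * F))) :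
    StrictMonoOn Y (Set.Ioi 0) ∧
    (∀ I > 0, (I / A) ^ 2 < 3 * f₁ → 0 < iteratedDeriv 2 Y I) := by
  set B := A ^ 2 * f₁ with hB
  set k := f₂ * N / (2 * F) with hk
  have hBpos : 0 < B := by positivity
  have hkpos : 0 < k := by positivity
  have hD : ∀ x : ℝ, 0 < B + x ^ 2 := fun x => by positivity
  have hD' : ∀ x : ℝ, B + x ^ 2 ≠ 0 := fun x => (hD x).ne'
  have hAne : A ≠ 0 := hA.ne'
  have Yeq : Y = fun x => k * (x ^ 3 / (B + x ^ 2)) := by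
    funext x
    have hfx : f₁ + (x / A) ^ 2 ≠ 0 := by positivity
    rw [hY, hk, hB]
    field_simp
  have hder : ∀ x : ℝ, HasDerivAt Y
      (k * ((3 * x ^ 2 * (B + x ^ 2) - x ^ 3 * (2 * x)) / (B + x ^ 2) ^ 2)) x := by
    intro x
    rw [Yeq]
    have h1 : HasDerivAt (fun x : ℝ => x ^ 3) (3 * x ^ 2) x := by
      simpa using hasDerivAt_pow 3 x
    have h2 : HasDerivAt (fun x : ℝ => B + x ^ 2) (2 * x) x := by
      simpa using ((hasDerivAt_pow 2 x).const_add B)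
    exact (h1.div h2 (hD' x)).const_mul k
  have hderiv : deriv Y = fun x =>
      k * ((3 * B * x ^ 2 + x ^ 4) / (B + x ^ 2) ^ 2) := by
    funext x
    rw [(hder x).deriv]
    ring
  constructor
  · apply strictMonoOn_of_deriv_pos (convex_Ioi 0)
    · rw [Yeq]
      exact (continuous_const.mul ((continuous_pow 3).div
        (continuous_const.add (continuous_pow 2)) hD')).continuousOn
    · intro x hx
      rw [interior_Ioi] at hx
      rw [hderiv]
      apply mul_pos hkpos
      apply div_pos
      · nlinarith [mul_pos (mul_pos hx hx) hBpos, pow_pos (show (0:ℝ) < x from hx) 4]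
      · exact pow_pos (hD x) 2
  · intro I hI hI2
    have hI2' : I ^ 2 < 3 * B := by
      have hIA : I ^ 2 = A ^ 2 * (I / A) ^ 2 := by field_simp
      have := mul_lt_mul_of_pos_left hI2 (pow_pos hA 2)
      rw [hB]; nlinarith
    have hn : HasDerivAt (fun x : ℝ => 3 * B * x ^ 2 + x ^ 4)
        (3 * B * (2 * I) + 4 * I ^ 3) I := by
      have h1 : HasDerivAt (fun x : ℝ => 3 * B * x ^ 2) (3 * B * (2 * I)) I := by
        simpa using ((hasDerivAt_pow 2 I).const_mul (3 * B))
      have h2 : HasDerivAt (fun x : ℝ => x ^ 4) (4 * I ^ 3) I := by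
        simpa using hasDerivAt_pow 4 I
      exact h1.add h2
    have h2 : HasDerivAt (fun x : ℝ => B + x ^ 2) (2 * I) I := by
      simpa using ((hasDerivAt_pow 2 I).const_add B)
    have hd : HasDerivAt (fun x : ℝ => (B + x ^ 2) ^ 2)
        (2 * (B + I ^ 2) ^ 1 * (2 * I)) I := h2.pow 2
    have hq : HasDerivAt (fun x : ℝ => k * ((3 * B * x ^ 2 + x ^ 4) / (B + x ^ 2) ^ 2))
        (k * (((3 * B * (2 * I) + 4 * I ^ 3) * (B + I ^ 2) ^ 2
          - (3 * B * I ^ 2 + I ^ 4) * (2 * (B + I ^ 2) ^ 1 * (2 * I))) / ((B + I ^ 2) ^ 2) ^ 2)) I :=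
      (hn.div hd (pow_ne_zero 2 (hD' I))).const_mul k
    have heq2 : iteratedDeriv 2 Y I
        = k * (((3 * B * (2 * I) + 4 * I ^ 3) * (B + I ^ 2) ^ 2
          - (3 * B * I ^ 2 + I ^ 4) * (2 * (B + I ^ 2) ^ 1 * (2 * I))) / ((B + I ^ 2) ^ 2) ^ 2) := by
      rw [iteratedDeriv_succ, iteratedDeriv_one, hderiv]
      exact hq.deriv
    rw [heq2]
    have hval : ((3 * B * (2 * I) + 4 * I ^ 3) * (B + I ^ 2) ^ 2
          - (3 * B * I ^ 2 + I ^ 4) * (2 * (B + I ^ 2) ^ 1 * (2 * I))) / ((B + I ^ 2) ^ 2) ^ 2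
        = 2 * B * I * (3 * B - I ^ 2) / (B + I ^ 2) ^ 3 := by
      rw [div_eq_div_iff (by positivity) (by positivity)]
      ring
    rw [hval]
    apply mul_pos hkpos
    apply div_pos
    · apply mul_pos (by positivity) (by linarith)
    · exact pow_pos (hD I) 3
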